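/- For formulas τ, τ' of Belnap–Dunn logic (built with ¬, ∧, ∨ only), τ classically entails τ' iff τ^t BD△-entails τ'^t, where τ^t is the result of replacing every propositional variable p by t(p) := △p ∧ ¬△¬p. -/

import Mathlib

inductive BDForm : Type
  | var : ℕ → BDForm
  | neg : BDForm → BDForm
  | and : BDForm → BDForm → BDForm
  | or : BDForm → BDForm → BDForm
  | delta : BDForm → BDForm
deriving DecidableEq

structure BDModel where
  W : Type
  vp : ℕ → W → Prop
  vm : ℕ → W → Prop

def BDModel.sat (M : BDModel) : Bool → BDForm → M.W → Prop
  | true, .var p, w => M.vp p w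
  | false, .var p, w => M.vm p w
  | b, .neg φ, w => M.sat (!b) φ w
  | true, .and φ ψ, w => M.sat true φ w ∧ M.sat true ψ w
  | false, .and φ ψ, w => M.sat false φ w ∨ M.sat false ψ w
  | true, .or φ ψ, w => M.sat true φ w ∨ M.sat true ψ w
  | false, .or φ ψ, w => M.sat false φ w ∧ M.sat false ψ w
  | true, .delta φ, w => M.sat true φ w
  | false, .delta φ, w => ¬ M.sat true φ w

/-- BD△ entailment: positive extension inclusion and reverse negative inclusion, in every model. -/
def Entails (φ χ : BDForm) : Prop :=
  ∀ (M : BDModel) (w : M.W),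
    (M.sat true φ w → M.sat true χ w) ∧ (M.sat false χ w → M.sat false φ w)

/-- the value-detecting formulas -/
def tF (φ : BDForm) : BDForm := (φ.delta).and ((φ.neg.delta).neg)
def bF (φ : BDForm) : BDForm := (φ.delta).and (φ.neg.delta)
def nF (φ : BDForm) : BDForm := ((φ.delta).neg).and ((φ.neg.delta).neg)
def fF (φ : BDForm) : BDForm := ((φ.delta).neg).and (φ.neg.delta)

def topF : BDForm := ((BDForm.var 0).delta).or (((BDForm.var 0).delta).neg)
def botF : BDForm := topF.neg
/-- φ contains no occurrence of △ -/
def noDelta : BDForm → Prop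
  | .var _ => True
  | .neg φ => noDelta φ
  | .and φ χ => noDelta φ ∧ noDelta χ
  | .or φ χ => noDelta φ ∧ noDelta χ
  | .delta _ => False

/-- classical (two-valued) valuation; on △-free formulas this is the standard one -/
def cval (v : ℕ → Bool) : BDForm → Bool
  | .var p => v p
  | .neg φ => !cval v φ
  | .and φ χ => cval v φ && cval v χ
  | .or φ χ => cval v φ || cval v χ
  | .delta φ => cval v φ

def CPLEntails (τ τ' : BDForm) : Prop :=
  ∀ v : ℕ → Bool, cval v τ = true → cval v τ' = true

/-- replace every variable p by t(p) = △p ∧ ¬△¬p -/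
def subT : BDForm → BDForm
  | .var p => tF (.var p)
  | .neg φ => (subT φ).neg
  | .and φ χ => (subT φ).and (subT χ)
  | .or φ χ => (subT φ).or (subT χ)
  | .delta φ => (subT φ).delta

lemma key_lemma (M : BDModel) (w : M.W) (v : ℕ → Bool)
    (hv : ∀ p, v p = true ↔ (M.vp p w ∧ ¬ M.vm p w)) :
    ∀ φ, noDelta φ →
      (M.sat true (subT φ) w ↔ cval v φ = true) ∧
      (M.sat false (subT φ) w ↔ cval v φ = false) := by
  intro φ
  induction φ with
  | var p =>
    intro _
    constructor
    · simp only [subT, tF, BDModel.sat, cval, Bool.not_true]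
      rw [hv p]
    · simp only [subT, tF, BDModel.sat, cval]
      rw [show (v p = false) ↔ ¬ (v p = true) by simp, hv p]
      tauto
  | neg φ ih =>
    intro hnd
    obtain ⟨h1, h2⟩ := ih hnd
    simp only [subT, BDModel.sat, cval, Bool.not_true, Bool.not_false,
      Bool.not_eq_true', Bool.not_eq_false'] at *
    exact ⟨h2, h1⟩
  | and φ χ ihφ ihχ =>
    intro hnd
    obtain ⟨h1, h2⟩ := ihφ hnd.1
    obtain ⟨h3, h4⟩ := ihχ hnd.2
    simp only [subT, BDModel.sat, cval, Bool.and_eq_true, Bool.and_eq_false_iff] at *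
    constructor
    · rw [h1, h3]
    · rw [h2, h4]
  | or φ χ ihφ ihχ =>
    intro hnd
    obtain ⟨h1, h2⟩ := ihφ hnd.1
    obtain ⟨h3, h4⟩ := ihχ hnd.2
    simp only [subT, BDModel.sat, cval, Bool.or_eq_true, Bool.or_eq_false_iff] at *
    constructor
    · rw [h1, h3]
    · rw [h2, h4]
  | delta φ ih =>
    intro hnd
    exact absurd hnd id


/-- for △-free τ, τ', classical entailment τ ⊨ τ' holds iff τ^t ⊨_{BD△} τ'^t. -/
theorem stmt13 (τ τ' : BDForm) (h : noDelta τ) (h' : noDelta τ') :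
    CPLEntails τ τ' ↔ Entails (subT τ) (subT τ') := by

  constructor
  · intro hc M w
    classical
    set v : ℕ → Bool := fun p => decide (M.vp p w ∧ ¬ M.vm p w) with hvdef
    have hv : ∀ p, v p = true ↔ (M.vp p w ∧ ¬ M.vm p w) := by
      intro p; simp [hvdef]
    obtain ⟨h1, h2⟩ := key_lemma M w v hv τ h
    obtain ⟨h3, h4⟩ := key_lemma M w v hv τ' h'
    constructor
    · intro hs
      exact h3.mpr (hc v (h1.mp hs))
    · intro hs
      rw [h2]
      have := h4.mp hs
      by_contra hcon
      rw [Bool.not_eq_false] at hcon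
      rw [hc v hcon] at this
      exact absurd this (by simp)
  · intro he v hvτ
    set M : BDModel := ⟨Unit, fun p _ => v p = true, fun p _ => v p = false⟩ with hM
    have hv : ∀ p, v p = true ↔ (M.vp p () ∧ ¬ M.vm p ()) := by
      intro p; show v p = true ↔ (v p = true ∧ ¬ v p = false); simp
    obtain ⟨h1, _⟩ := key_lemma M () v hv τ h
    obtain ⟨h3, _⟩ := key_lemma M () v hv τ' h'
    exact h3.mp ((he M ()).1 (h1.mpr hvτ))
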